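/- arXiv:2406.05956 — 4 statements merged into one kernel-verified Lean document; each statement's English description precedes it below -/
import Mathlib

section
/- Shock speed approximation (Theorem 1.2, estimate (sm1)): For every left end state (v₋,u₋,θ₋) with v₋>0, θ₋>0 there exist positive constants ε₀ and C such that for every right end state (v₊,u₊,θ₊) satisfying the Rankine–Hugoniot conditions with speed σ=σ_ε and the Lax 3-shock condition with amplitude ε = v₊−v₋ < ε₀, one has |σ_ε − σ*| ≤ C ε, where σ_ε = √(−(p₊−p₋)/(v₊−v₋)) and σ* = √(γp₋/v₋). -/
open Real Filter Topology

/-- The Rankine–Hugoniot conditions with speed `σ` connecting the left end state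
`(vm, um, θm)` to the right end state `(vp, up, θp)`, for the ideal polytropic gas with
constants `γ` and `R` (so that `p± = R θ± / v±` and `E± = R θ± / (γ - 1) + u± ^ 2 / 2`). -/
def RankineHugoniot (γ R σ vm um θm vp up θp : ℝ) : Prop :=
  -σ * (vp - vm) - (up - um) = 0 ∧
  -σ * (up - um) + (R * θp / vp - R * θm / vm) = 0 ∧
  -σ * ((R * θp / (γ - 1) + up ^ 2 / 2) - (R * θm / (γ - 1) + um ^ 2 / 2)) +
    ((R * θp / vp) * up - (R * θm / vm) * um) = 0

/-- The shock speed `σ_ε = √(-(p₊ - p₋)/(v₊ - v₋))` is within `Cε` of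
`σ* = √(γ p₋ / v₋)`. -/
theorem shock_speed_approximation
    (γ R : ℝ) (hγ : 1 < γ) (hR : 0 < R)
    (vm um θm : ℝ) (hvm : 0 < vm) (hθm : 0 < θm) :
    ∃ ε₀ C : ℝ, 0 < ε₀ ∧ 0 < C ∧
      ∀ vp up θp σ : ℝ, 0 < vp → 0 < θp →
        RankineHugoniot γ R σ vm um θm vp up θp →
        vm < vp → up < um → θp < θm →
        σ = Real.sqrt (-((R * θp / vp - R * θm / vm) / (vp - vm))) →
        vp - vm < ε₀ →
        |σ - Real.sqrt (γ * (R * θm / vm) / vm)| ≤ C * (vp - vm) := by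
  have hγ1 : γ - 1 ≠ 0 := by intro h; linarith
  set s := Real.sqrt (γ * (R * θm / vm) / vm) with hs
  have hs_pos : 0 < s := Real.sqrt_pos.2 (by positivity)
  have hs2 : s ^ 2 = γ * (R * θm / vm) / vm := Real.sq_sqrt (by positivity)
  have hs2'' : s ^ 2 * vm ^ 2 = γ * (R * θm) := by
    rw [hs2]; field_simp
  refine ⟨1, s * (γ + 1) / (2 * vm), one_pos, by positivity, ?_⟩
  intro vp up θp σ hvp hθp hRH hv hu hθ hσ hε₀
  obtain ⟨h1, h2, h3⟩ := hRH
  have hε : 0 < vp - vm := by linarith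
  -- pressure comparison
  have hplt : R * θp / vp < R * θm / vm := by
    rw [div_lt_div_iff₀ hvp hvm]
    nlinarith [mul_pos (mul_pos hR hθm) hε, mul_pos (mul_pos hR (sub_pos.2 hθ)) hvm]
  have hApos : 0 < -((R * θp / vp - R * θm / vm) / (vp - vm)) := by
    have hrew : -((R * θp / vp - R * θm / vm) / (vp - vm))
        = (R * θm / vm - R * θp / vp) / (vp - vm) := by ring
    rw [hrew]
    exact div_pos (by linarith) hε
  have hσ2 : σ ^ 2 = -((R * θp / vp - R * θm / vm) / (vp - vm)) := by
    rw [hσ]; exact Real.sq_sqrt hApos.le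
  have hσpos : 0 < σ := by rw [hσ]; exact Real.sqrt_pos.2 hApos
  -- cleared-denominator form of the speed relation
  have hB : σ ^ 2 * ((vp - vm) * (vm * vp)) = R * θm * vp - R * θp * vm := by
    rw [hσ2]; field_simp; ring
  -- eliminate up using the first RH condition
  have hup : up = um - σ * (vp - vm) := by linarith
  rw [hup] at h3
  field_simp at h3
  -- Hugoniot relation (times σ)
  have hC' : σ * (2 * vm * vp * (R * θp - R * θm)
      + (γ - 1) * (R * θp * vm + R * θm * vp) * (vp - vm)) = 0 := by
    linear_combination (-1 : ℝ) * h3 + ((γ - 1) * (2 * um - σ * (vp - vm))) * hB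
  have hC2 : 2 * vm * vp * (R * θp - R * θm)
      + (γ - 1) * (R * θp * vm + R * θm * vp) * (vp - vm) = 0 :=
    (mul_eq_zero.1 hC').resolve_left hσpos.ne'
  -- key identity (times ε)
  have hkey' : (2 * (σ ^ 2 * vm) * (vm * vp)
      - ((γ + 1) * (R * θp * vm) + (γ - 1) * (R * θm * vp))) * (vp - vm) = 0 := by
    linear_combination 2 * vm * hB - hC2
  have hkey : 2 * (σ ^ 2 * vm) * (vm * vp)
      = (γ + 1) * (R * θp * vm) + (γ - 1) * (R * θm * vp) := by
    have := (mul_eq_zero.1 hkey').resolve_right hε.ne'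
    linarith
  -- difference of squares identity
  have hdiff : (s ^ 2 - σ ^ 2) * (2 * vm ^ 2 * vp)
      = (γ + 1) * (σ ^ 2 * ((vp - vm) * (vm * vp))) := by
    linear_combination 2 * vp * hs2'' - hkey - (γ + 1) * hB
  clear h1 h2 h3 hC' hC2 hkey' hkey hσ hσ2 hup hu hApos hplt hε₀ hs2
  have hlt : σ ^ 2 < s ^ 2 := by
    have hprod : 0 < (s ^ 2 - σ ^ 2) * (2 * vm ^ 2 * vp) := by
      rw [hdiff]
      exact mul_pos (by linarith) (mul_pos (pow_pos hσpos 2)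
        (mul_pos hε (mul_pos hvm hvp)))
    rcases mul_pos_iff.mp hprod with ⟨h, _⟩ | ⟨_, h⟩
    · linarith
    · linarith [show (0:ℝ) < 2 * vm ^ 2 * vp by positivity]
  have hσlt : σ < s := lt_of_pow_lt_pow_left₀ 2 hs_pos.le hlt
  rw [abs_of_nonpos (by linarith)]
  rw [div_mul_eq_mul_div, le_div_iff₀ (by positivity : (0:ℝ) < 2 * vm)]
  -- final inequality: (s - σ) * (2 vm) ≤ s (γ+1) ε
  nlinarith [hdiff, mul_pos (mul_pos (by positivity : (0:ℝ) < s + σ) hvm) hvp,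
    mul_nonneg (mul_nonneg (mul_nonneg hε.le hvm.le) hvp.le) (mul_pos hs_pos hσpos).le,
    mul_nonneg (mul_nonneg (mul_nonneg hε.le hvm.le) hvp.le) (sub_nonneg.2 hlt.le),
    hσpos.le, hs_pos.le]
end

section
/- Scalar autonomous ODE lemma (Lemma 3.1): Let a < b be real numbers, B : ℝ → ℝ be continuously differentiable on [a,b] with B(a) = B(b) = 0 and B(x) > 0 for all x ∈ (a,b), and let f₀ ∈ (a,b). Then there exists a unique C¹ function f : ℝ → [a,b] satisfying f'(z) = B(f(z)) for all z ∈ ℝ and f(0) = f₀. Moreover, this f is strictly increasing, f(z) → a as z → −∞, and f(z) → b as z → +∞. -/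
/-!
Separation of variables. On `(a, b)` the time map `F x = ∫_{f₀}^x dt / B t` is strictly
increasing. Since `B` is Lipschitz on `[a, b]` and vanishes at the endpoints, `B t ≤ K · dist t e`
for `e ∈ {a, b}`, so `F` diverges logarithmically to `∓∞` at `a` and `b`. Hence `F` is an order
isomorphism `(a, b) ≃o ℝ`, and its inverse is the solution. Uniqueness is the uniqueness part of
Picard–Lindelöf for the Lipschitz field `B` on `[a, b]`.
-/

open Real Filter Topology Set

theorem LipschitzOnWith.le_mul_dist_of_apply_eq_zero {α : Type*} [PseudoMetricSpace α]
    {f : α → ℝ} {s : Set α} {K : NNReal} (hf : LipschitzOnWith K f s) {x y : α} (hx : x ∈ s)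
    (hy : y ∈ s) (hy0 : f y = 0) : f x ≤ K * dist x y :=
  (le_abs_self _).trans (by simpa [hy0, Real.dist_eq] using hf.dist_le_mul x hx y hy)

theorem contDiff_one_of_hasDerivAt_comp {f B : ℝ → ℝ} {s : Set ℝ} (hB : ContinuousOn B s)
    (hfs : ∀ z, f z ∈ s) (hf : ∀ z, HasDerivAt f (B (f z)) z) : ContDiff ℝ 1 f := by
  refine contDiff_one_iff_deriv.2 ⟨fun z => (hf z).differentiableAt, ?_⟩
  rw [funext fun z => (hf z).deriv]
  exact hB.comp_continuous (continuous_iff_continuousAt.2 fun z => (hf z).continuousAt) hfs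

theorem tendsto_integral_inv_nhdsLT_atTop {φ : ℝ → ℝ} {b c K : ℝ} (hcb : c < b)
    (hφ : ContinuousOn φ (Ico c b)) (hpos : ∀ t ∈ Ico c b, 0 < φ t)
    (hle : ∀ t ∈ Ico c b, φ t ≤ K * dist t b) :
    Tendsto (fun x => ∫ t in c..x, (φ t)⁻¹) (𝓝[<] b) atTop := by
  have hK : 0 < K := pos_of_mul_pos_left
    ((hpos c ⟨le_rfl, hcb⟩).trans_le (hle c ⟨le_rfl, hcb⟩)) dist_nonneg
  have hlower : ∀ x ∈ Ico c b, K⁻¹ * log ((b - c) / (b - x)) ≤ ∫ t in c..x, (φ t)⁻¹ := by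
    intro x hx
    have hsub : Icc c x ⊆ Ico c b := Icc_subset_Ico_right hx.2
    have hgap : ∀ t ∈ Icc c x, 0 < b - t := fun t ht => sub_pos.2 (hsub ht).2
    calc K⁻¹ * log ((b - c) / (b - x)) = ∫ t in c..x, K⁻¹ * (b - t)⁻¹ := by
          rw [intervalIntegral.integral_const_mul, intervalIntegral.integral_comp_sub_left
            (fun s => s⁻¹), integral_inv_of_pos (by linarith [hx.2]) (by linarith)]
      _ ≤ ∫ t in c..x, (φ t)⁻¹ := by
          refine intervalIntegral.integral_mono_on hx.1 ?_ ?_ fun t ht => ?_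
          · exact (continuousOn_const.mul ((continuousOn_const.sub continuousOn_id).inv₀
              fun t ht => (hgap t ht).ne')).intervalIntegrable_of_Icc hx.1
          · exact ((hφ.mono hsub).inv₀ fun t ht => (hpos t (hsub ht)).ne').intervalIntegrable_of_Icc
              hx.1
          · rw [← mul_inv]
            refine inv_anti₀ (hpos t (hsub ht)) ((hle t (hsub ht)).trans_eq ?_)
            rw [dist_comm, dist_eq, abs_of_pos (hgap t ht)]
  have hgap : Tendsto (fun x => b - x) (𝓝[<] b) (𝓝[>] 0) :=
    tendsto_nhdsWithin_iff.2 ⟨((continuous_const.sub continuous_id).tendsto' b 0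
      (sub_self b)).mono_left nhdsWithin_le_nhds,
      eventually_nhdsWithin_of_forall fun x hx => mem_Ioi.2 (sub_pos.2 hx)⟩
  refine tendsto_atTop_mono' _ ?_ (Tendsto.const_mul_atTop (inv_pos.2 hK) (tendsto_log_atTop.comp
    (Tendsto.const_mul_atTop (sub_pos.2 hcb) (tendsto_inv_nhdsGT_zero.comp hgap))))
  filter_upwards [Ico_mem_nhdsLT hcb] with x hx
  simpa only [Function.comp_apply, div_eq_mul_inv] using hlower x hx

theorem tendsto_integral_inv_nhdsGT_atBot {φ : ℝ → ℝ} {a c K : ℝ} (hac : a < c)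
    (hφ : ContinuousOn φ (Ioc a c)) (hpos : ∀ t ∈ Ioc a c, 0 < φ t)
    (hle : ∀ t ∈ Ioc a c, φ t ≤ K * dist t a) :
    Tendsto (fun x => ∫ t in c..x, (φ t)⁻¹) (𝓝[>] a) atBot := by
  have hneg : ∀ t ∈ Ico (-c) (-a), -t ∈ Ioc a c := fun t ht =>
    ⟨by linarith [ht.2], by linarith [ht.1]⟩
  have hreflected := tendsto_integral_inv_nhdsLT_atTop (φ := fun t => φ (-t)) (neg_lt_neg hac)
    (hφ.comp continuousOn_neg hneg) (fun t ht => hpos _ (hneg t ht))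
    (fun t ht => (hle _ (hneg t ht)).trans_eq (by rw [← dist_neg_neg, neg_neg]))
  have hflip : Tendsto Neg.neg (𝓝[>] a) (𝓝[<] (-a)) := by
    simpa only [neg_neg] using tendsto_neg_nhdsGT_neg (a := -a)
  refine (tendsto_neg_atTop_atBot.comp (hreflected.comp hflip)).congr fun x => ?_
  simp only [Function.comp_apply, intervalIntegral.integral_comp_neg (fun t => (φ t)⁻¹), neg_neg,
    intervalIntegral.integral_symm c x]

theorem exists_orderIso_Ioo_of_tendsto {F : ℝ → ℝ} {a b : ℝ} (hab : a < b)
    (hF : ContinuousOn F (Ioo a b)) (hmono : StrictMonoOn F (Ioo a b))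
    (hFa : Tendsto F (𝓝[>] a) atBot) (hFb : Tendsto F (𝓝[<] b) atTop) :
    ∃ e : Ioo a b ≃o ℝ, ∀ x, e x = F x := by
  have hsurj := hF.surjOn_of_tendsto (nonempty_Ioo.2 hab) ((tendsto_comp_coe_Ioo_atBot hab).2 hFa)
    ((tendsto_comp_coe_Ioo_atTop hab).2 hFb)
  refine ⟨StrictMono.orderIsoOfSurjective (fun x : Ioo a b => F x) (fun x y h => hmono x.2 y.2 h)
    fun y => ?_, fun _ => rfl⟩
  obtain ⟨x, hx, rfl⟩ := hsurj (mem_univ y)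
  exact ⟨⟨x, hx⟩, rfl⟩

theorem ContinuousOn.hasDerivAt_integral_of_mem_Ioo {E : Type*} [NormedAddCommGroup E]
    [NormedSpace ℝ E] [CompleteSpace E] {g : ℝ → E} {a b x₀ x : ℝ} (hg : ContinuousOn g (Ioo a b))
    (hx₀ : x₀ ∈ Ioo a b) (hx : x ∈ Ioo a b) :
    HasDerivAt (fun x => ∫ t in x₀..x, g t) (g x) x :=
  intervalIntegral.integral_hasDerivAt_right
    ((hg.mono (ordConnected_Ioo.uIcc_subset hx₀ hx)).intervalIntegrable)
    (hg.stronglyMeasurableAtFilter isOpen_Ioo x hx) (hg.continuousAt (Ioo_mem_nhds hx.1 hx.2))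

theorem exists_strictMono_odeSolution_of_tendsto_integral_inv {B : ℝ → ℝ} {a b x₀ : ℝ}
    (hB : ContinuousOn B (Ioo a b)) (hBpos : ∀ x ∈ Ioo a b, 0 < B x) (hx₀ : x₀ ∈ Ioo a b)
    (ha : Tendsto (fun x => ∫ t in x₀..x, (B t)⁻¹) (𝓝[>] a) atBot)
    (hb : Tendsto (fun x => ∫ t in x₀..x, (B t)⁻¹) (𝓝[<] b) atTop) :
    ∃ f : ℝ → ℝ, (∀ z, f z ∈ Ioo a b) ∧ (∀ z, HasDerivAt f (B (f z)) z) ∧ f 0 = x₀ ∧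
      StrictMono f ∧ Tendsto f atBot (𝓝 a) ∧ Tendsto f atTop (𝓝 b) := by
  have hab : a < b := hx₀.1.trans hx₀.2
  set F := fun x => ∫ t in x₀..x, (B t)⁻¹
  have hF' : ∀ x ∈ Ioo a b, HasDerivAt F (B x)⁻¹ x := fun x hx =>
    (hB.inv₀ fun y hy => (hBpos y hy).ne').hasDerivAt_integral_of_mem_Ioo hx₀ hx
  have hFcont : ContinuousOn F (Ioo a b) := fun x hx =>
    (hF' x hx).continuousAt.continuousWithinAt
  have hFmono : StrictMonoOn F (Ioo a b) := by
    refine strictMonoOn_of_deriv_pos (convex_Ioo a b) hFcont fun x hx => ?_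
    rw [interior_Ioo] at hx
    rw [(hF' x hx).deriv]
    exact inv_pos.2 (hBpos x hx)
  obtain ⟨e, he⟩ := exists_orderIso_Ioo_of_tendsto hab hFcont hFmono ha hb
  have hFe : ∀ z, F (e.symm z) = z := fun z => by rw [← he, e.apply_symm_apply]
  refine ⟨fun z => e.symm z, fun z => (e.symm z).2, fun z => ?_, ?_,
    (Subtype.strictMono_coe _).comp e.symm.strictMono,
    ((tendsto_comp_coe_Ioo_atBot hab).2 (tendsto_id.mono_left nhdsWithin_le_nhds)).comp
      e.symm.tendsto_atBot,
    ((tendsto_comp_coe_Ioo_atTop hab).2 (tendsto_id.mono_left nhdsWithin_le_nhds)).comp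
      e.symm.tendsto_atTop⟩
  · simpa only [inv_inv, Function.comp_def] using (hF' _ (e.symm z).2).of_local_left_inverse
      (continuous_subtype_val.comp e.symm.continuous).continuousAt
      (inv_ne_zero (hBpos _ (e.symm z).2).ne') (Eventually.of_forall hFe)
  · have he₀ : e ⟨x₀, hx₀⟩ = 0 := (he _).trans intervalIntegral.integral_same
    simp only [← he₀, OrderIso.symm_apply_apply]

/-- Scalar autonomous ODE lemma: for `B` which is `C¹` on `[a, b]`, vanishes at the
endpoints and is positive inside, there is a unique `C¹` solution of `f' = B ∘ f`,
`f 0 = f₀`, taking values in `[a, b]`; it is strictly increasing and connects `a` to `b`. -/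
theorem scalar_autonomous_ode_lemma
    (a b : ℝ) (hab : a < b) (B : ℝ → ℝ)
    (hB : ContDiffOn ℝ 1 B (Set.Icc a b))
    (hBa : B a = 0) (hBb : B b = 0)
    (hBpos : ∀ x ∈ Set.Ioo a b, 0 < B x)
    (f₀ : ℝ) (hf₀ : f₀ ∈ Set.Ioo a b) :
    ∃ f : ℝ → ℝ,
      ((∀ z, f z ∈ Set.Icc a b) ∧ ContDiff ℝ 1 f ∧
        (∀ z, HasDerivAt f (B (f z)) z) ∧ f 0 = f₀) ∧
      StrictMono f ∧
      Tendsto f atBot (𝓝 a) ∧ Tendsto f atTop (𝓝 b) ∧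
      ∀ g : ℝ → ℝ, (∀ z, g z ∈ Set.Icc a b) → ContDiff ℝ 1 g →
        (∀ z, HasDerivAt g (B (g z)) z) → g 0 = f₀ → g = f := by
  obtain ⟨K, hL⟩ := hB.exists_lipschitzOnWith one_ne_zero (convex_Icc a b) isCompact_Icc
  have hlow : ∀ t ∈ Ioc a f₀, t ∈ Ioo a b := fun t ht => ⟨ht.1, ht.2.trans_lt hf₀.2⟩
  have hupp : ∀ t ∈ Ico f₀ b, t ∈ Ioo a b := fun t ht => ⟨hf₀.1.trans_le ht.1, ht.2⟩
  obtain ⟨f, hf_mem, hf_deriv, hf0, hf_mono, hf_bot, hf_top⟩ :=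
    exists_strictMono_odeSolution_of_tendsto_integral_inv
      (hB.continuousOn.mono Ioo_subset_Icc_self) hBpos hf₀
      (tendsto_integral_inv_nhdsGT_atBot hf₀.1
        (hB.continuousOn.mono fun t ht => Ioo_subset_Icc_self (hlow t ht))
        (fun t ht => hBpos t (hlow t ht)) fun t ht => hL.le_mul_dist_of_apply_eq_zero
          (Ioo_subset_Icc_self (hlow t ht)) (left_mem_Icc.2 hab.le) hBa)
      (tendsto_integral_inv_nhdsLT_atTop hf₀.2
        (hB.continuousOn.mono fun t ht => Ioo_subset_Icc_self (hupp t ht))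
        (fun t ht => hBpos t (hupp t ht)) fun t ht => hL.le_mul_dist_of_apply_eq_zero
          (Ioo_subset_Icc_self (hupp t ht)) (right_mem_Icc.2 hab.le) hBb)
  have hf_Icc : ∀ z, f z ∈ Icc a b := fun z => Ioo_subset_Icc_self (hf_mem z)
  refine ⟨f, ⟨hf_Icc, contDiff_one_of_hasDerivAt_comp hB.continuousOn hf_Icc hf_deriv, hf_deriv,
    hf0⟩, hf_mono, hf_bot, hf_top, fun g hg_mem _ hg_deriv hg0 => ?_⟩
  exact ODE_solution_unique_univ (v := fun _ => B) (s := fun _ => Icc a b) (t₀ := 0)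
    (fun _ => hL) (fun z => ⟨hg_deriv z, hg_mem z⟩) (fun z => ⟨hf_deriv z, hf_Icc z⟩)
    (hg0.trans hf0.symm)
end

section
/- Equation of the critical manifold (equation (c-mfd)): Let γ>1, R>0, μ>0, τ>0, κ>0, v₋>0, p₋>0 and set σ* := √(γp₋/v₋). Then for all real numbers w₀ and w₁, the equation 0 = (1/(μτκ))·((Rσ*/(γ−1)) v₋ γ p₋ ((γ+1)/2) w₀ − (Rσ*/(γ−1)) v₋ γ p₋ w₀²) − (R γ p₋ v₋/((γ−1)κ))·((μ+τ)/(μτ)) w₁ − (R σ* v₋ γ p₋/(μτκ))·(1/2) w₀² + (R v₋/(μτκ)) p₋ τ w₁ − (1/(μτ))(γ−1) v₋ p₋ w₁ holds if and only if w₁ = A (w₀ − w₀²), where A := (R γ σ* / (Rτ + Rγμ + (γ−1)²κ))·((γ+1)/2). -/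
open Real Filter Topology

/-!
Collecting terms, the right-hand side of the critical-manifold equation factors as
`v p / ((γ - 1) μ τ κ) · (R γ σ* (γ + 1)/2 · (w₀ - w₀²) - D w₁)` with
`D = R τ + R γ μ + (γ - 1)² κ`: the two `w₀²` terms merge because
`1 + (γ - 1)/2 = (γ + 1)/2`, and the three `w₁` coefficients add up to `-D` times the prefactor.
The prefactor and `D` are positive, so the equation says exactly `D w₁ = R γ σ* (γ + 1)/2 · (w₀ - w₀²)`.
-/

lemma critical_manifold_rhs_eq_mul (γ R μ τ κ v p σs w₀ w₁ : ℝ) (hγ : γ - 1 ≠ 0)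
    (hμ : μ ≠ 0) (hτ : τ ≠ 0) (hκ : κ ≠ 0) :
    (1 / (μ * τ * κ)) *
          (R * σs / (γ - 1) * v * γ * p * ((γ + 1) / 2) * w₀ -
            R * σs / (γ - 1) * v * γ * p * w₀ ^ 2) -
        R * γ * p * v / ((γ - 1) * κ) * ((μ + τ) / (μ * τ)) * w₁ -
        R * σs * v * γ * p / (μ * τ * κ) * (1 / 2) * w₀ ^ 2 +
        R * v / (μ * τ * κ) * p * τ * w₁ -
        1 / (μ * τ) * (γ - 1) * v * p * w₁ =
      v * p / ((γ - 1) * μ * τ * κ) *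
        (R * γ * σs * ((γ + 1) / 2) * (w₀ - w₀ ^ 2) -
          (R * τ + R * γ * μ + (γ - 1) ^ 2 * κ) * w₁) := by
  field_simp
  ring

theorem critical_manifold_equation_general
    (γ R μ τ κ v p σs A : ℝ) (hγ : 1 < γ) (hR : 0 < R) (hμ : 0 < μ) (hτ : 0 < τ)
    (hκ : 0 < κ) (hv : 0 < v) (hp : 0 < p)
    (hA : A = R * γ * σs / (R * τ + R * γ * μ + (γ - 1) ^ 2 * κ) * ((γ + 1) / 2)) :
    ∀ w₀ w₁ : ℝ,
      (0 = (1 / (μ * τ * κ)) *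
            (R * σs / (γ - 1) * v * γ * p * ((γ + 1) / 2) * w₀ -
              R * σs / (γ - 1) * v * γ * p * w₀ ^ 2) -
          R * γ * p * v / ((γ - 1) * κ) * ((μ + τ) / (μ * τ)) * w₁ -
          R * σs * v * γ * p / (μ * τ * κ) * (1 / 2) * w₀ ^ 2 +
          R * v / (μ * τ * κ) * p * τ * w₁ -
          1 / (μ * τ) * (γ - 1) * v * p * w₁) ↔
        w₁ = A * (w₀ - w₀ ^ 2) := by
  intro w₀ w₁
  have hγ1 : 0 < γ - 1 := sub_pos.mpr hγ
  have hD : 0 < R * τ + R * γ * μ + (γ - 1) ^ 2 * κ := by positivity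
  have hc : v * p / ((γ - 1) * μ * τ * κ) ≠ 0 := by positivity
  rw [critical_manifold_rhs_eq_mul γ R μ τ κ v p σs w₀ w₁ hγ1.ne' hμ.ne' hτ.ne' hκ.ne',
    zero_eq_mul, or_iff_right hc, sub_eq_zero, eq_comm, mul_comm, ← eq_div_iff hD.ne', hA,
    div_mul_eq_mul_div, div_mul_eq_mul_div]

/-- Equation of the critical manifold: with `σ* = √(γ p₋ / v₋)` and
`A = (R γ σ* / (R τ + R γ μ + (γ-1)² κ)) ((γ+1)/2)`, the equation of the critical
manifold holds iff `w₁ = A (w₀ - w₀²)`. -/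
theorem critical_manifold_equation
    (γ R μ τ κ v p σs A : ℝ) (hγ : 1 < γ) (hR : 0 < R) (hμ : 0 < μ) (hτ : 0 < τ)
    (hκ : 0 < κ) (hv : 0 < v) (hp : 0 < p)
    (hσs : σs = Real.sqrt (γ * p / v))
    (hA : A = R * γ * σs / (R * τ + R * γ * μ + (γ - 1) ^ 2 * κ) * ((γ + 1) / 2)) :
    ∀ w₀ w₁ : ℝ,
      (0 = (1 / (μ * τ * κ)) *
            (R * σs / (γ - 1) * v * γ * p * ((γ + 1) / 2) * w₀ -
              R * σs / (γ - 1) * v * γ * p * w₀ ^ 2) -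
          R * γ * p * v / ((γ - 1) * κ) * ((μ + τ) / (μ * τ)) * w₁ -
          R * σs * v * γ * p / (μ * τ * κ) * (1 / 2) * w₀ ^ 2 +
          R * v / (μ * τ * κ) * p * τ * w₁ -
          1 / (μ * τ) * (γ - 1) * v * p * w₁) ↔
        w₁ = A * (w₀ - w₀ ^ 2) :=
  critical_manifold_equation_general γ R μ τ κ v p σs A hγ hR hμ hτ hκ hv hp hA
end

section
/- Spectral structure of the linearization at the left end state (Section 3.2): Let γ>1, R>0, μ>0, τ>0, κ>0, v₋>0, θ₋>0, p₋ = Rθ₋/v₋, and let σ>0 satisfy σ²v₋ < γp₋. Consider the 3×3 real matrix J with rows (−σv₋/τ, −v₋/τ, 0), (−p₋/μ, −σv₋/μ, R/μ), (0, v₋p₋/κ, −(R/(γ−1))σv₋/κ). Then det J = (1/(μτκ))·(Rσv₋²/(γ−1))·(γp₋ − σ²v₋) > 0 and tr J = −σv₋(R/((γ−1)κ) + 1/μ + 1/τ) < 0; consequently J has exactly one eigenvalue (over ℂ, counted with algebraic multiplicity) with strictly positive real part, and this eigenvalue is real. In particular, the unstable manifold of the profile ODE system at the critical point (v₋,u₋,θ₋)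 is one-dimensional. -/
/-!
Over `ℂ` the characteristic polynomial of a real `3 × 3` matrix `M` with `det M > 0` and
`tr M ≤ 0` is `X³ - (tr M) X² + a X - det M`. It is negative at `0` and tends to `+∞`, so it has a
root `r > 0`; the cofactor is `X² + b X + c` with `b = r - tr M > 0` and `c = det M / r > 0`, and
every root `z` of such a quadratic has `Re z < 0`, because taking the real part of
`conj z * (z² + b z + c) = 0` gives `Re z * (|z|² + c) = -b |z|²`. So `r` is simple and all other
eigenvalues lie in the open left half-plane. For the Jacobian `J`, `det J > 0` is exactly the
subsonic condition `σ² v₋ < γ p₋`.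
-/

open Polynomial Filter

theorem Complex.re_neg_of_sq_add_mul_add_eq_zero {b c : ℝ} (hb : 0 < b) (hc : 0 < c) {z : ℂ}
    (hz : z ^ 2 + b * z + c = 0) : z.re < 0 := by
  have hre : z.re ^ 2 - z.im ^ 2 + b * z.re + c = 0 := by
    simpa [sq] using congrArg Complex.re hz
  have him : (2 * z.re + b) * z.im = 0 := by
    have := congrArg Complex.im hz
    simp only [sq, add_im, mul_im, ofReal_re, ofReal_im, zero_mul, add_zero, zero_im] at this
    linear_combination this
  have key : z.re * (z.re ^ 2 + z.im ^ 2 + c) = -b * (z.re ^ 2 + z.im ^ 2) := by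
    linear_combination z.re * hre + z.im * him
  by_contra! h
  have hnorm : z.re ^ 2 + z.im ^ 2 = 0 := by
    have hpos : 0 ≤ z.re ^ 2 + z.im ^ 2 + c := by positivity
    nlinarith [sq_nonneg z.re, sq_nonneg z.im, mul_nonneg h hpos]
  nlinarith [sq_nonneg z.re, sq_nonneg z.im]

theorem Polynomial.exists_pos_isRoot_of_eval_zero_neg {p : ℝ[X]} (hlc : 0 < p.leadingCoeff)
    (h0 : p.eval 0 < 0) : ∃ r, 0 < r ∧ p.IsRoot r := by
  have hdeg : 0 < p.degree := by
    by_contra! h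
    rw [eq_C_of_degree_le_zero h, leadingCoeff_C] at hlc
    rw [eq_C_of_degree_le_zero h, eval_C] at h0
    linarith
  obtain ⟨b, hb0, hb⟩ : ∃ b, 0 < p.eval b ∧ 0 < b :=
    (((p.tendsto_atTop_of_leadingCoeff_nonneg hdeg hlc.le).eventually_gt_atTop 0).and
      (eventually_gt_atTop 0)).exists
  obtain ⟨r, hr, hroot⟩ :=
    intermediate_value_Ioo hb.le p.continuous.continuousOn ⟨h0, hb0⟩
  exact ⟨r, hr.1, hroot⟩

theorem Polynomial.Monic.re_neg_of_aeval_eq_zero_of_natDegree_eq_two {g : ℝ[X]} (hg : g.Monic)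
    (hdeg : g.natDegree = 2) (h0 : 0 < g.coeff 0) (h1 : 0 < g.coeff 1) {z : ℂ}
    (hz : aeval z g = 0) : z.re < 0 := by
  have h2 : g.coeff 2 = 1 := hdeg ▸ hg.coeff_natDegree
  rw [aeval_eq_sum_range, hdeg] at hz
  simp only [Finset.sum_range_succ, Finset.sum_range_zero, h2, Complex.real_smul,
    Complex.ofReal_one, one_mul, pow_zero, pow_one, mul_one, zero_add] at hz
  exact Complex.re_neg_of_sq_add_mul_add_eq_zero h1 h0 (by linear_combination hz)

theorem Polynomial.Monic.exists_mul_X_sub_C_of_natDegree_eq_three {p : ℝ[X]} (hp : p.Monic)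
    (hdeg : p.natDegree = 3) (h0 : p.coeff 0 < 0) (h2 : 0 ≤ p.coeff 2) :
    ∃ r : ℝ, 0 < r ∧ ∃ g : ℝ[X], g.Monic ∧ g.natDegree = 2 ∧ 0 < g.coeff 0 ∧ 0 < g.coeff 1 ∧
      p = g * (X - C r) := by
  obtain ⟨r, hr, hroot⟩ := exists_pos_isRoot_of_eval_zero_neg (hp.leadingCoeff ▸ one_pos)
    (by rwa [← coeff_zero_eq_eval_zero])
  set g := p /ₘ (X - C r)
  have hfac : g * (X - C r) = p := by
    rw [mul_comm]; exact mul_divByMonic_eq_iff_isRoot.mpr hroot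
  have hg : g.Monic := (monic_X_sub_C r).of_mul_monic_right (hfac ▸ hp)
  have hgdeg : g.natDegree = 2 := by
    have := hg.natDegree_mul (monic_X_sub_C r)
    rw [hfac, hdeg, natDegree_X_sub_C] at this
    omega
  have hc0 : p.coeff 0 = -(g.coeff 0 * r) := by
    rw [← hfac, mul_coeff_zero]; simp
  have hc2 : p.coeff 2 = g.coeff 1 - r := by
    have hg2 : g.coeff 2 = 1 := hgdeg ▸ hg.coeff_natDegree
    rw [← hfac, coeff_mul_X_sub_C, hg2, one_mul]
  refine ⟨r, hr, g, hg, hgdeg, ?_, by linarith, hfac.symm⟩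
  nlinarith

theorem Polynomial.Monic.exists_simple_pos_root_of_natDegree_eq_three {p : ℝ[X]}
    (hp : p.Monic) (hdeg : p.natDegree = 3) (h0 : p.coeff 0 < 0) (h2 : 0 ≤ p.coeff 2) :
    ∃ r : ℝ, 0 < r ∧ (p.map (algebraMap ℝ ℂ)).roots.count (r : ℂ) = 1 ∧
      ∀ l ∈ (p.map (algebraMap ℝ ℂ)).roots, l ≠ r → l.re < 0 := by
  obtain ⟨r, hr, g, hg, hgdeg, hg0, hg1, hfac⟩ :=
    hp.exists_mul_X_sub_C_of_natDegree_eq_three hdeg h0 h2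
  have hneg : ∀ z ∈ (g.map (algebraMap ℝ ℂ)).roots, z.re < 0 := fun z hz ↦
    hg.re_neg_of_aeval_eq_zero_of_natDegree_eq_two hgdeg hg0 hg1
      ((mem_roots_map_of_injective Complex.ofReal_injective hg.ne_zero).mp hz)
  have hroots :
      (p.map (algebraMap ℝ ℂ)).roots = (g.map (algebraMap ℝ ℂ)).roots + {(r : ℂ)} := by
    rw [hfac, Polynomial.map_mul, roots_mul, Polynomial.map_sub, map_X, map_C, roots_X_sub_C]
    · simp
    · exact mul_ne_zero (hg.map _).ne_zero ((monic_X_sub_C r).map _).ne_zero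
  have hr_notMem : (r : ℂ) ∉ (g.map (algebraMap ℝ ℂ)).roots := fun h ↦
    (hneg _ h).not_ge (by rw [Complex.ofReal_re]; exact hr.le)
  refine ⟨r, hr, ?_, fun l hl hlr ↦ ?_⟩
  · rw [hroots, Multiset.count_add, Multiset.count_eq_zero.mpr hr_notMem]
    simp
  · rw [hroots, Multiset.mem_add, Multiset.mem_singleton] at hl
    exact hl.resolve_right hlr |> hneg l

theorem Matrix.exists_simple_pos_eigenvalue_of_det_pos_of_trace_nonpos
    (M : Matrix (Fin 3) (Fin 3) ℝ) (hdet : 0 < M.det) (htr : M.trace ≤ 0) :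
    ∃ r : ℝ, 0 < r ∧ (M.map Complex.ofReal).charpoly.roots.count (r : ℂ) = 1 ∧
      ∀ l ∈ (M.map Complex.ofReal).charpoly.roots, l ≠ (r : ℂ) → l.re < 0 := by
  have hc0 : M.charpoly.coeff 0 = -M.det := by
    simp [M.det_eq_sign_charpoly_coeff, pow_succ]
  have hc2 : M.charpoly.coeff 2 = -M.trace := by
    simp [M.trace_eq_neg_charpoly_coeff]
  rw [show M.map Complex.ofReal = M.map (algebraMap ℝ ℂ) from rfl, M.charpoly_map]
  exact M.charpoly_monic.exists_simple_pos_root_of_natDegree_eq_three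
    (M.charpoly_natDegree_eq_dim.trans (Fintype.card_fin 3)) (by linarith) (by linarith)

theorem linearization_spectral_structure_general
    (γ R μ τ κ v σ p : ℝ) (hγ : 1 < γ) (hR : 0 < R) (hμ : 0 < μ) (hτ : 0 < τ)
    (hκ : 0 < κ) (hv : 0 < v) (hσ : 0 < σ)
    (hsub : σ ^ 2 * v < γ * p)
    (J : Matrix (Fin 3) (Fin 3) ℝ)
    (hJ : J = !![-(σ * v) / τ, -v / τ, 0;
                 -p / μ, -(σ * v) / μ, R / μ;
                 0, v * p / κ, -(R / (γ - 1)) * (σ * v) / κ]) :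
    J.det = 1 / (μ * τ * κ) * (R * σ * v ^ 2 / (γ - 1)) * (γ * p - σ ^ 2 * v) ∧
    0 < J.det ∧
    J.trace = -(σ * v) * (R / ((γ - 1) * κ) + 1 / μ + 1 / τ) ∧
    J.trace < 0 ∧
    ∃ r : ℝ, 0 < r ∧
      (J.map Complex.ofReal).charpoly.roots.count (r : ℂ) = 1 ∧
      ∀ l ∈ (J.map Complex.ofReal).charpoly.roots, l ≠ (r : ℂ) → l.re < 0 := by
  have hγ1 : 0 < γ - 1 := sub_pos.mpr hγ
  have hdet : J.det = 1 / (μ * τ * κ) * (R * σ * v ^ 2 / (γ - 1)) * (γ * p - σ ^ 2 * v) := by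
    rw [hJ, Matrix.det_fin_three]
    simp only [Matrix.of_apply, Matrix.cons_val', Matrix.cons_val_zero, Matrix.cons_val_one,
      Matrix.cons_val, Matrix.cons_val_fin_one]
    field_simp
    ring
  have htr : J.trace = -(σ * v) * (R / ((γ - 1) * κ) + 1 / μ + 1 / τ) := by
    rw [hJ, Matrix.trace_fin_three]
    simp only [Matrix.of_apply, Matrix.cons_val', Matrix.cons_val_zero, Matrix.cons_val_one,
      Matrix.cons_val, Matrix.cons_val_fin_one]
    field_simp
    ring
  have hdet_pos : 0 < J.det := by
    rw [hdet]
    have := sub_pos.mpr hsub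
    positivity
  have htr_neg : J.trace < 0 := by
    rw [htr, neg_mul]
    exact neg_neg_of_pos (by positivity)
  exact ⟨hdet, hdet_pos, htr, htr_neg,
    J.exists_simple_pos_eigenvalue_of_det_pos_of_trace_nonpos hdet_pos htr_neg.le⟩

/-- Spectral structure of the linearization of the profile ODE at the left end state:
the Jacobian `J` has positive determinant and negative trace with the stated closed
forms, and (over `ℂ`, counting algebraic multiplicity) exactly one eigenvalue with
strictly positive real part, which is real and simple, all other eigenvalues having
strictly negative real part; in particular the unstable manifold at `(v₋, u₋, θ₋)` is
one-dimensional. -/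
theorem linearization_spectral_structure
    (γ R μ τ κ v θ σ p : ℝ) (hγ : 1 < γ) (hR : 0 < R) (hμ : 0 < μ) (hτ : 0 < τ)
    (hκ : 0 < κ) (hv : 0 < v) (hθ : 0 < θ) (hσ : 0 < σ)
    (hp : p = R * θ / v) (hsub : σ ^ 2 * v < γ * p)
    (J : Matrix (Fin 3) (Fin 3) ℝ)
    (hJ : J = !![-(σ * v) / τ, -v / τ, 0;
                 -p / μ, -(σ * v) / μ, R / μ;
                 0, v * p / κ, -(R / (γ - 1)) * (σ * v) / κ]) :
    J.det = 1 / (μ * τ * κ) * (R * σ * v ^ 2 / (γ - 1)) * (γ * p - σ ^ 2 * v) ∧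
    0 < J.det ∧
    J.trace = -(σ * v) * (R / ((γ - 1) * κ) + 1 / μ + 1 / τ) ∧
    J.trace < 0 ∧
    ∃ r : ℝ, 0 < r ∧
      (J.map Complex.ofReal).charpoly.roots.count (r : ℂ) = 1 ∧
      ∀ l ∈ (J.map Complex.ofReal).charpoly.roots, l ≠ (r : ℂ) → l.re < 0 :=
  linearization_spectral_structure_general γ R μ τ κ v σ p hγ hR hμ hτ hκ hv hσ hsub J hJ
end
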